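/- Let f: A → B be a surjective rack homomorphism. Then the relation C₁(f) on A — generated as an equivalence relation by the pairs ((x ◁ a) ◁⁻¹ b, x) for x, a, b ∈ A with f(a) = f(b) — is compatible with the rack operation, is contained in the kernel pair of f, and the induced map A/C₁(f) → B is a covering. -/

import Mathlib

/-- A rack: a set with operations `◁`, `◁⁻¹` satisfying (R1) and (R2). -/
class PaperRack (X : Type*) where
  act : X → X → X
  inv : X → X → X
  r1a : ∀ x y, inv (act x y) y = x
  r1b : ∀ x y, act (inv x y) y = x
  r2 : ∀ x y z, act (act x y) z = act (act x z) (act y z)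

infixl:70 " ◁ " => PaperRack.act
infixl:70 " ◁⁻¹ " => PaperRack.inv

/-- The centralizing relation `C₁(f)`: the equivalence relation on `A` generated
by the pairs `((x ◁ a) ◁⁻¹ b, x)` with `f a = f b`. -/
def C1 {A B : Type*} [PaperRack A] (f : A → B) : A → A → Prop :=
  Relation.EqvGen fun u v => ∃ x a b : A, f a = f b ∧ u = (x ◁ a) ◁⁻¹ b ∧ v = x

/-!
Every generator `((x ◁ a) ◁⁻¹ b, x)` of `C₁(f)` lies in the kernel pair of `f`, because
`f ((x ◁ a) ◁⁻¹ b) = (f x ◁ f a) ◁⁻¹ f b = f x` when `f a = f b`; hence so does `C₁(f)`.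
Right translation by `c` maps generators to generators by self-distributivity, so `C₁(f)` is
right compatible. Left compatibility reduces to right compatibility: if `f c = f d` then
`(x ◁ c) ◁⁻¹ d ~ x`, and translating by `d` gives `x ◁ c ~ x ◁ d`. The covering property of
`A/C₁(f) → B` then holds because `C₁(f)` contains its generators.
-/

namespace PaperRack

variable {X : Type*} [PaperRack X]

theorem inv_act_distrib (x y z : X) : (x ◁⁻¹ y) ◁ z = (x ◁ z) ◁⁻¹ (y ◁ z) := by
  have h : ((x ◁⁻¹ y) ◁ z) ◁ (y ◁ z) = x ◁ z := by rw [← r2, r1b]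
  rw [← h, r1a]

end PaperRack

namespace Relation.EqvGen

variable {α β : Type*} {r : α → α → Prop} {a b : α}

theorem apply_eq_of_rel {f : α → β} (hf : ∀ a b, r a b → f a = f b) (h : EqvGen r a b) :
    f a = f b :=
  congrArg (Quot.lift f hf) (Quot.eqvGen_sound h)

theorem map_of_rel {s : β → β → Prop} (φ : α → β) (hφ : ∀ a b, r a b → s (φ a) (φ b))
    (h : EqvGen r a b) : EqvGen s (φ a) (φ b) :=
  Quot.eqvGen_exact (congrArg (Quot.map φ hφ) (Quot.eqvGen_sound h))

end Relation.EqvGen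

namespace C1

variable {A B : Type*} [PaperRack A] {f : A → B}

theorem of_apply_eq (x : A) {a b : A} (h : f a = f b) : C1 f ((x ◁ a) ◁⁻¹ b) x :=
  .rel _ _ ⟨x, a, b, h, rfl, rfl⟩

variable [PaperRack B]

theorem apply_eq (hact : ∀ x y : A, f (x ◁ y) = f x ◁ f y)
    (hinv : ∀ x y : A, f (x ◁⁻¹ y) = f x ◁⁻¹ f y) {a b : A} (h : C1 f a b) : f a = f b := by
  refine Relation.EqvGen.apply_eq_of_rel ?_ h
  rintro _ _ ⟨x, p, q, hpq, rfl, rfl⟩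
  rw [hinv, hact, hpq, PaperRack.r1a]

theorem act_right (hact : ∀ x y : A, f (x ◁ y) = f x ◁ f y) (c : A) {a b : A}
    (h : C1 f a b) : C1 f (a ◁ c) (b ◁ c) := by
  refine Relation.EqvGen.map_of_rel (· ◁ c) ?_ h
  rintro _ x ⟨y, p, q, hpq, rfl, rfl⟩
  refine ⟨x ◁ c, p ◁ c, q ◁ c, by rw [hact, hact, hpq], ?_, rfl⟩
  rw [PaperRack.inv_act_distrib, PaperRack.r2]

theorem act_left_of_apply_eq (hact : ∀ x y : A, f (x ◁ y) = f x ◁ f y) (x : A) {c d : A}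
    (h : f c = f d) : C1 f (x ◁ c) (x ◁ d) := by
  simpa only [PaperRack.r1b] using act_right hact d (of_apply_eq x h)

theorem act (hact : ∀ x y : A, f (x ◁ y) = f x ◁ f y)
    (hinv : ∀ x y : A, f (x ◁⁻¹ y) = f x ◁⁻¹ f y) {a b c d : A} (hab : C1 f a b)
    (hcd : C1 f c d) : C1 f (a ◁ c) (b ◁ d) :=
  .trans _ _ _ (act_left_of_apply_eq hact a (apply_eq hact hinv hcd)) (act_right hact d hab)

end C1

/-- For a surjective rack homomorphism `f : A → B`, the relation `C₁(f)` is
compatible with the rack operation, is contained in the kernel pair of `f`,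
and the induced map `A/C₁(f) → B` is a covering. -/
theorem centralization_is_covering {A B : Type*} [PaperRack A] [PaperRack B]
    (f : A → B)
    (hact : ∀ x y : A, f (x ◁ y) = f x ◁ f y)
    (hinv : ∀ x y : A, f (x ◁⁻¹ y) = f x ◁⁻¹ f y)
    (hsurj : Function.Surjective f) :
    (∀ a b c d : A, C1 f a b → C1 f c d → C1 f (a ◁ c) (b ◁ d)) ∧
    (∀ a b : A, C1 f a b → f a = f b) ∧
    (∃ g : Quot (C1 f) → B,
      (∀ a : A, g (Quot.mk (C1 f) a) = f a) ∧
      Function.Surjective g ∧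
      ∀ x a b : A, g (Quot.mk (C1 f) a) = g (Quot.mk (C1 f) b) →
        Quot.mk (C1 f) ((x ◁ a) ◁⁻¹ b) = Quot.mk (C1 f) x) := by
  have ker : ∀ a b : A, C1 f a b → f a = f b := fun _ _ => C1.apply_eq hact hinv
  refine ⟨fun _ _ _ _ => C1.act hact hinv, ker, Quot.lift f ker, fun _ => rfl, ?_, ?_⟩
  · exact hsurj.forall.2 fun a => ⟨Quot.mk _ a, rfl⟩
  · exact fun x a b h => Quot.sound (C1.of_apply_eq x h)
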